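/- Let k ≥ 1 be an integer, let m : (0,∞) → ℂ be of class C^k and satisfy the Mihlin–Hörmander condition of order k, and let φ : (0,∞) → (0,∞) be a smooth increasing function for which there exist real exponents γ, γ′ > 0 and constants M, δ > 0 such that: (i) |φ^{(j)}(s)| ≤ M·s^{γ−j} for all 0 < s ≤ 1 and all integers 0 ≤ j ≤ k, and |φ^{(j)}(s)| ≤ M·s^{γ′−j} for all s ≥ 1 and all integers 0 ≤ j ≤ k; (ii) φ^{(j)}(s) ≥ δ·s^{γ−j} for all 0 < s ≤ 1 and j ∈ {0,1}, and φ^{(j)}(s) ≥ δ·s^{γ′−j} for all s ≥ 1 and j ∈ {0,1}. Then m ∘ φ also satisfies the Mihlin–Hörmander condition of order k. -/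

import Mathlib

open MeasureTheory

/-- The Mihlin–Hörmander condition of (integer) order `k` for a function on `(0,∞)`:
for every `j ≤ k`, `sup_{r>0} r^{2j−1} ∫_r^{2r} |m^{(j)}(s)|² ds < ∞`, where the
derivatives are taken within `(0,∞)`. -/
def MihlinHormanderCond (k : ℕ) (m : ℝ → ℂ) : Prop :=
  ∀ j : ℕ, j ≤ k → ∃ A : ℝ, ∀ r : ℝ, 0 < r →
    r ^ (2 * (j : ℤ) - 1) *
        ∫ s in Set.Ioc r (2 * r), ‖iteratedDerivWithin j m (Set.Ioi 0) s‖ ^ 2 ≤ A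

open Set

lemma stmt15_min_rpow_le {a b s e : ℝ} (ha : 0 < a) (has : a ≤ s) (hsb : s ≤ b) :
    min (a ^ e) (b ^ e) ≤ s ^ e := by
  rcases le_or_gt 0 e with he | he
  · exact (min_le_left _ _).trans (Real.rpow_le_rpow ha.le has he)
  · exact (min_le_right _ _).trans (Real.rpow_le_rpow_of_nonpos (ha.trans_le has) hsb he.le)

lemma stmt15_rpow_le_max {a b s e : ℝ} (ha : 0 < a) (has : a ≤ s) (hsb : s ≤ b) :
    s ^ e ≤ max (a ^ e) (b ^ e) := by
  rcases le_or_gt 0 e with he | he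
  · exact (Real.rpow_le_rpow (ha.trans_le has).le hsb he).trans (le_max_right _ _)
  · exact (Real.rpow_le_rpow_of_nonpos ha has he.le).trans (le_max_left _ _)

lemma stmt15_dyadic (g : ℝ → ℝ) (hg0 : ∀ t, 0 < t → 0 ≤ g t)
    (hgc : ContinuousOn g (Set.Ioi (0:ℝ)))
    (e : ℤ) (he : e ≤ 1)
    (A : ℝ) (hA : ∀ r : ℝ, 0 < r → ∫ t in Set.Ioc r (2*r), g t ≤ A * r ^ e) (N : ℕ) :
    ∃ C : ℝ, 0 ≤ C ∧ ∀ a : ℝ, 0 < a → ∫ t in Set.Ioc a (2^N * a), g t ≤ C * a ^ e := by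
  have hA0 : 0 ≤ A := by
    have h1 := hA 1 one_pos
    have h2 : (0:ℝ) ≤ ∫ t in Set.Ioc (1:ℝ) (2*1), g t := by
      apply setIntegral_nonneg measurableSet_Ioc
      intro t ht
      exact hg0 t (lt_trans one_pos ht.1)
    simpa using le_trans h2 h1
  induction N with
  | zero =>
    refine ⟨0, le_refl _, fun a ha => ?_⟩
    simp [Set.Ioc_self]
  | succ N ih =>
    obtain ⟨C, hC0, hC⟩ := ih
    refine ⟨C + A * 2^N, by positivity, fun a ha => ?_⟩
    have h2N : (1:ℝ) ≤ 2^N := one_le_pow₀ one_le_two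
    have hle1 : a ≤ 2^N * a := le_mul_of_one_le_left ha.le h2N
    have hle2 : (2:ℝ)^N * a ≤ 2^(N+1) * a := by
      have : (2:ℝ)^N ≤ 2^(N+1) := pow_le_pow_right₀ one_le_two (Nat.le_succ N)
      exact mul_le_mul_of_nonneg_right this ha.le
    have hunion : Set.Ioc a (2^N * a) ∪ Set.Ioc (2^N * a) (2^(N+1) * a)
        = Set.Ioc a (2^(N+1) * a) := Set.Ioc_union_Ioc_eq_Ioc hle1 hle2
    have hint : ∀ u v : ℝ, 0 < u → IntegrableOn g (Set.Ioc u v) := by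
      intro u v hu
      rcases le_or_gt v u with h | h
      · rw [Set.Ioc_eq_empty (not_lt.mpr h)]; exact integrableOn_empty
      · refine (hgc.mono ?_ |>.integrableOn_Icc).mono_set Set.Ioc_subset_Icc_self
        intro x hx; exact lt_of_lt_of_le hu hx.1
    have hdisj : Disjoint (Set.Ioc a (2^N * a)) (Set.Ioc (2^N * a) (2^(N+1) * a)) := by
      apply Set.disjoint_left.mpr
      intro x hx1 hx2
      exact absurd hx1.2 (not_le.mpr hx2.1)
    have hsplit : ∫ t in Set.Ioc a (2^(N+1) * a), g t
        = (∫ t in Set.Ioc a (2^N * a), g t) + ∫ t in Set.Ioc (2^N * a) (2^(N+1) * a), g t := by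
      rw [← hunion]
      exact setIntegral_union hdisj measurableSet_Ioc (hint _ _ ha)
        (hint _ _ (by positivity))
    rw [hsplit]
    have hstep : ∫ t in Set.Ioc (2^N * a) (2^(N+1) * a), g t ≤ A * 2^N * a ^ e := by
      have := hA (2^N * a) (by positivity)
      have heq : 2 * (2^N * a) = 2^(N+1) * a := by ring
      rw [heq] at this
      refine this.trans ?_
      rw [mul_zpow, mul_assoc]
      refine mul_le_mul_of_nonneg_left ?_ hA0
      refine mul_le_mul_of_nonneg_right ?_ (le_of_lt (zpow_pos ha e))
      calc ((2:ℝ)^N) ^ e = (2:ℝ) ^ ((N:ℤ) * e) := by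
            rw [← zpow_natCast (2:ℝ) N, ← zpow_mul]
        _ ≤ (2:ℝ) ^ (N:ℤ) := by
            apply zpow_le_zpow_right₀ one_le_two
            calc (N:ℤ) * e ≤ (N:ℤ) * 1 := by
                  apply mul_le_mul_of_nonneg_left he (by positivity)
              _ = N := by ring
        _ = (2:ℝ)^N := by rw [zpow_natCast]
    have := add_le_add (hC a ha) hstep
    refine this.trans (le_of_eq ?_)
    ring
lemma stmt15_subst (φ : ℝ → ℝ) (hφ_smooth : ContDiffOn ℝ (⊤:ℕ∞) φ (Set.Ioi 0))
    (hφ_mono : StrictMonoOn φ (Set.Ioi 0))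
    (g : ℝ → ℝ) (hgc : ContinuousOn g (Set.Ioi (0:ℝ))) (hg0 : ∀ t, 0 < t → 0 ≤ g t)
    (hφ_pos : ∀ s : ℝ, 0 < s → 0 < φ s)
    (r c : ℝ) (hr : 0 < r) (hc : 0 < c)
    (hd : ∀ s ∈ Set.Icc r (2*r), c ≤ deriv φ s) :
    ∫ s in Set.Ioc r (2*r), g (φ s) ≤ c⁻¹ * ∫ t in Set.Ioc (φ r) (φ (2*r)), g t := by
  have hr2 : r ≤ 2 * r := by linarith
  have hsubU : Set.Icc r (2*r) ⊆ Set.Ioi (0:ℝ) := fun x hx => lt_of_lt_of_le hr hx.1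
  have hφdiff : DifferentiableOn ℝ φ (Set.Ioi 0) := hφ_smooth.differentiableOn (by simp)
  have hder : ∀ x ∈ Set.Icc r (2*r), HasDerivAt φ (deriv φ x) x := fun x hx =>
    (hφdiff.differentiableAt (isOpen_Ioi.mem_nhds (hsubU hx))).hasDerivAt
  -- continuity of deriv φ on Ioi 0
  have hderiv_cont : ContinuousOn (deriv φ) (Set.Ioi (0:ℝ)) := by
    have h1 : ContinuousOn (iteratedDerivWithin 1 φ (Set.Ioi 0)) (Set.Ioi 0) :=
      hφ_smooth.continuousOn_iteratedDerivWithin (by exact_mod_cast le_top) (uniqueDiffOn_Ioi 0)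
    refine h1.congr fun x hx => ?_
    rw [iteratedDerivWithin_one,
      derivWithin_of_isOpen isOpen_Ioi hx]
  have hφcont : ContinuousOn φ (Set.Icc r (2*r)) := hφdiff.continuousOn.mono hsubU
  have hgφcont : ContinuousOn (fun s => g (φ s)) (Set.Icc r (2*r)) := by
    refine hgc.comp hφcont fun x hx => hφ_pos x (hsubU hx)
  have hInt1 : IntegrableOn (fun s => g (φ s)) (Set.Ioc r (2*r)) :=
    hgφcont.integrableOn_Icc.mono_set Set.Ioc_subset_Icc_self
  have hInt2 : IntegrableOn (fun s => c⁻¹ * (deriv φ s * g (φ s))) (Set.Ioc r (2*r)) := by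
    refine (ContinuousOn.integrableOn_Icc ?_).mono_set Set.Ioc_subset_Icc_self
    exact (continuousOn_const.mul ((hderiv_cont.mono hsubU).mul hgφcont))
  have step1 : ∫ s in Set.Ioc r (2*r), g (φ s)
      ≤ ∫ s in Set.Ioc r (2*r), c⁻¹ * (deriv φ s * g (φ s)) := by
    refine setIntegral_mono_on hInt1 hInt2 measurableSet_Ioc fun s hs => ?_
    have hs' : s ∈ Set.Icc r (2*r) := Set.Ioc_subset_Icc_self hs
    have hg0' : 0 ≤ g (φ s) := hg0 _ (hφ_pos s (hsubU hs'))
    have hds := hd s hs'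
    calc g (φ s) = c⁻¹ * (c * g (φ s)) := by field_simp
      _ ≤ c⁻¹ * (deriv φ s * g (φ s)) := by
          apply mul_le_mul_of_nonneg_left _ (inv_nonneg.mpr hc.le)
          exact mul_le_mul_of_nonneg_right hds hg0'
  have step2 : ∫ s in Set.Ioc r (2*r), c⁻¹ * (deriv φ s * g (φ s))
      = c⁻¹ * ∫ s in Set.Ioc r (2*r), deriv φ s * g (φ s) := MeasureTheory.integral_const_mul _ _
  have huIcc : Set.uIcc r (2*r) = Set.Icc r (2*r) := Set.uIcc_of_le hr2
  have step3 : ∫ s in Set.Ioc r (2*r), deriv φ s * g (φ s)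
      = ∫ t in Set.Ioc (φ r) (φ (2*r)), g t := by
    have hCoV : (∫ s in r..(2*r), deriv φ s • ((g ∘ φ) s))
        = ∫ t in (φ r)..(φ (2*r)), g t := by
      apply intervalIntegral.integral_comp_smul_deriv'
      · intro x hx; exact hder x (huIcc ▸ hx)
      · rw [huIcc]; exact hderiv_cont.mono hsubU
      · rw [huIcc]
        refine hgc.mono ?_
        rintro t ⟨x, hx, rfl⟩
        exact hφ_pos x (hsubU hx)
    have hmono : φ r ≤ φ (2*r) :=
      (hφ_mono.monotoneOn) (hsubU ⟨le_refl r, hr2⟩) (hsubU ⟨hr2, le_refl _⟩) hr2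
    rw [intervalIntegral.integral_of_le hr2, intervalIntegral.integral_of_le hmono] at hCoV
    rw [← hCoV]
    rfl
  rw [step2, step3] at step1
  exact step1
lemma stmt15_fdb (k : ℕ) (m : ℝ → ℂ) (φ : ℝ → ℝ)
    (hm_smooth : ContDiffOn ℝ k m (Set.Ioi 0))
    (hφ_smooth : ContDiffOn ℝ (⊤:ℕ∞) φ (Set.Ioi 0))
    (hφ_pos : ∀ s : ℝ, 0 < s → 0 < φ s) :
    ∀ j : ℕ, 1 ≤ j → j ≤ k →
    ∃ (n : ℕ) (idx : Fin n → ℕ) (a : Fin n → ℕ → ℕ),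
      (∀ p, 1 ≤ idx p ∧ idx p ≤ j) ∧
      (∀ p, ∀ l ∈ Finset.range (idx p), 1 ≤ a p l) ∧
      (∀ p, ∑ l ∈ Finset.range (idx p), a p l = j) ∧
      (∀ s ∈ Set.Ioi (0:ℝ), iteratedDerivWithin j (fun x => m (φ x)) (Set.Ioi 0) s
        = ∑ p, (∏ l ∈ Finset.range (idx p), iteratedDerivWithin (a p l) φ (Set.Ioi 0) s)
            • iteratedDerivWithin (idx p) m (Set.Ioi 0) (φ s)) := by
  classical
  have hU : UniqueDiffOn ℝ (Set.Ioi (0:ℝ)) := uniqueDiffOn_Ioi 0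
  have hmaps : Set.MapsTo φ (Set.Ioi 0) (Set.Ioi (0:ℝ)) := fun x hx => hφ_pos x hx
  have hφdiffIter : ∀ b : ℕ, ∀ s ∈ Set.Ioi (0:ℝ),
      HasDerivWithinAt (iteratedDerivWithin b φ (Set.Ioi 0))
        (iteratedDerivWithin (b+1) φ (Set.Ioi 0) s) (Set.Ioi 0) s := by
    intro b s hs
    have hdiff : DifferentiableWithinAt ℝ (iteratedDerivWithin b φ (Set.Ioi 0)) (Set.Ioi 0) s := by
      refine (hφ_smooth.differentiableOn_iteratedDerivWithin ?_ hU) s hs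
      exact_mod_cast lt_top_iff_ne_top.mpr (ENat.coe_ne_top b)
    have := hdiff.hasDerivWithinAt
    rwa [← iteratedDerivWithin_succ] at this
  have hmdiffIter : ∀ i : ℕ, i < k → ∀ t ∈ Set.Ioi (0:ℝ),
      HasDerivWithinAt (iteratedDerivWithin i m (Set.Ioi 0))
        (iteratedDerivWithin (i+1) m (Set.Ioi 0) t) (Set.Ioi 0) t := by
    intro i hi t ht
    have hdiff : DifferentiableWithinAt ℝ (iteratedDerivWithin i m (Set.Ioi 0)) (Set.Ioi 0) t := by
      refine (hm_smooth.differentiableOn_iteratedDerivWithin ?_ hU) t ht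
      exact_mod_cast hi
    have := hdiff.hasDerivWithinAt
    rwa [← iteratedDerivWithin_succ] at this
  -- composed derivative of `Dm i ∘ φ`
  have hcompDeriv : ∀ i : ℕ, i < k → ∀ s ∈ Set.Ioi (0:ℝ),
      HasDerivWithinAt (fun x => iteratedDerivWithin i m (Set.Ioi 0) (φ x))
        ((iteratedDerivWithin 1 φ (Set.Ioi 0) s) •
          iteratedDerivWithin (i+1) m (Set.Ioi 0) (φ s)) (Set.Ioi 0) s := by
    intro i hi s hs
    have hφ1 : HasDerivWithinAt φ (iteratedDerivWithin 1 φ (Set.Ioi 0) s) (Set.Ioi 0) s := by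
      have := hφdiffIter 0 s hs
      rwa [iteratedDerivWithin_zero] at this
    exact (hmdiffIter i hi (φ s) (hmaps hs)).scomp s hφ1 hmaps
  intro j hj1
  induction j, hj1 using Nat.le_induction with
  | base =>
    intro hk1
    refine ⟨1, fun _ => 1, fun _ _ => 1, fun p => ⟨le_refl _, le_refl _⟩,
      fun p l _ => le_refl _, fun p => by simp, fun s hs => ?_⟩
    have h1 : HasDerivWithinAt (fun x => m (φ x))
        ((iteratedDerivWithin 1 φ (Set.Ioi 0) s) •
          iteratedDerivWithin 1 m (Set.Ioi 0) (φ s)) (Set.Ioi 0) s := by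
      have := hcompDeriv 0 hk1 s hs
      rwa [iteratedDerivWithin_zero] at this
    rw [iteratedDerivWithin_one, h1.derivWithin (hU s hs)]
    simp
  | succ j hj1 ih =>
    intro hjk
    obtain ⟨n, idx, a, hidx, hpos, hsum, heq⟩ := ih (le_trans (Nat.le_succ j) hjk)
    -- new index type
    set ι' := (p : Fin n) × Fin (idx p + 1) with hι'
    let F : ι' → ℕ × (ℕ → ℕ) := fun q =>
      if (q.2 : ℕ) < idx q.1 then (idx q.1, Function.update (a q.1) (q.2 : ℕ) (a q.1 (q.2 : ℕ) + 1))
      else (idx q.1 + 1, Function.update (a q.1) (idx q.1) 1)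
    let e := (Fintype.equivFin ι').symm
    refine ⟨Fintype.card ι', fun q => (F (e q)).1, fun q => (F (e q)).2, ?_, ?_, ?_, ?_⟩
    · intro q
      rcases lt_or_ge ((e q).2 : ℕ) (idx (e q).1) with h | h
      · simp only [F, if_pos h]
        exact ⟨(hidx (e q).1).1, le_trans (hidx (e q).1).2 (Nat.le_succ j)⟩
      · simp only [F, if_neg (not_lt.mpr h)]
        exact ⟨Nat.le_add_left 1 _, Nat.succ_le_succ (hidx (e q).1).2⟩
    · intro q l hl
      rcases lt_or_ge ((e q).2 : ℕ) (idx (e q).1) with h | h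
      · simp only [F, if_pos h] at hl ⊢
        rcases eq_or_ne l ((e q).2 : ℕ) with rfl | hne
        · rw [Function.update_self]; omega
        · rw [Function.update_of_ne hne]
          exact hpos (e q).1 l (by simpa using hl)
      · simp only [F, if_neg (not_lt.mpr h)] at hl ⊢
        rcases eq_or_ne l (idx (e q).1) with rfl | hne
        · rw [Function.update_self]
        · rw [Function.update_of_ne hne]
          refine hpos (e q).1 l ?_
          simp only [Finset.mem_range] at hl ⊢
          omega
    · intro q
      rcases lt_or_ge ((e q).2 : ℕ) (idx (e q).1) with h | h
      · simp only [F, if_pos h]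
        have hmem : ((e q).2 : ℕ) ∈ Finset.range (idx (e q).1) := Finset.mem_range.mpr h
        rw [Finset.sum_update_of_mem hmem]
        have h2 := hsum (e q).1
        rw [Finset.sum_eq_sum_sdiff_singleton_add hmem] at h2
        omega
      · simp only [F, if_neg (not_lt.mpr h)]
        rw [Finset.sum_range_succ, Function.update_self]
        have : ∑ l ∈ Finset.range (idx (e q).1), Function.update (a (e q).1) (idx (e q).1) 1 l
            = ∑ l ∈ Finset.range (idx (e q).1), a (e q).1 l := by
          refine Finset.sum_congr rfl fun l hl => ?_
          exact Function.update_of_ne (Nat.ne_of_lt (Finset.mem_range.mp hl)) _ _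
        rw [this, hsum (e q).1]
    · intro s hs
      -- the function G agreeing with the j-th derivative on Ioi 0
      set Dφ : ℕ → ℝ → ℝ := fun b => iteratedDerivWithin b φ (Set.Ioi 0) with hDφ
      set Dm : ℕ → ℝ → ℂ := fun i => iteratedDerivWithin i m (Set.Ioi 0) with hDm
      set G : ℝ → ℂ := fun x => ∑ p, (∏ l ∈ Finset.range (idx p), Dφ (a p l) x) • Dm (idx p) (φ x)
        with hG
      have hstep1 : iteratedDerivWithin (j+1) (fun x => m (φ x)) (Set.Ioi 0) s
          = derivWithin G (Set.Ioi 0) s := by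
        rw [iteratedDerivWithin_succ]
        exact derivWithin_congr (fun x hx => heq x hx) (heq s hs)
      -- derivative of G
      have hGd : HasDerivWithinAt G
          (∑ p, ((∏ l ∈ Finset.range (idx p), Dφ (a p l) s) •
              ((Dφ 1 s) • Dm (idx p + 1) (φ s))
            + (∑ l ∈ Finset.range (idx p),
                (∏ l' ∈ (Finset.range (idx p)).erase l, Dφ (a p l') s) • Dφ (a p l + 1) s)
              • Dm (idx p) (φ s))) (Set.Ioi 0) s := by
        apply HasDerivWithinAt.fun_sum
        intro p _
        have hc : HasDerivWithinAt (fun x => ∏ l ∈ Finset.range (idx p), Dφ (a p l) x)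
            (∑ l ∈ Finset.range (idx p),
              (∏ l' ∈ (Finset.range (idx p)).erase l, Dφ (a p l') s) • Dφ (a p l + 1) s)
            (Set.Ioi 0) s :=
          HasDerivWithinAt.fun_finsetProd fun l _ => hφdiffIter (a p l) s hs
        have hw : HasDerivWithinAt (fun x => Dm (idx p) (φ x))
            ((Dφ 1 s) • Dm (idx p + 1) (φ s)) (Set.Ioi 0) s :=
          hcompDeriv (idx p) (by have := (hidx p).2; omega) s hs
        exact hc.smul hw
      rw [hstep1, hGd.derivWithin (hU s hs)]
      -- now rearrange the sum
      refine Eq.trans ?_ (Equiv.sum_comp e (fun σ : ι' =>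
        (∏ l ∈ Finset.range ((F σ).1), Dφ ((F σ).2 l) s) • Dm ((F σ).1) (φ s))).symm
      rw [← Finset.univ_sigma_univ, Finset.sum_sigma]
      refine Finset.sum_congr rfl fun p _ => ?_
      rw [Fin.sum_univ_castSucc]
      have hlast : (F ⟨p, Fin.last (idx p)⟩ : ℕ × (ℕ → ℕ))
          = (idx p + 1, Function.update (a p) (idx p) 1) := by
        simp only [F, Fin.val_last]
        rw [if_neg (lt_irrefl _)]
      have hlast_term : (∏ l ∈ Finset.range ((F ⟨p, Fin.last (idx p)⟩).1),
            Dφ ((F ⟨p, Fin.last (idx p)⟩).2 l) s) • Dm ((F ⟨p, Fin.last (idx p)⟩).1) (φ s)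
          = (∏ l ∈ Finset.range (idx p), Dφ (a p l) s) • ((Dφ 1 s) • Dm (idx p + 1) (φ s)) := by
        rw [hlast]
        simp only
        rw [Finset.prod_range_succ, Function.update_self]
        have hcongr : ∏ l ∈ Finset.range (idx p), Dφ (Function.update (a p) (idx p) 1 l) s
            = ∏ l ∈ Finset.range (idx p), Dφ (a p l) s := by
          refine Finset.prod_congr rfl fun l hl => ?_
          rw [Function.update_of_ne (Nat.ne_of_lt (Finset.mem_range.mp hl))]
        rw [hcongr, mul_smul]
      have hcast_term : ∀ l : Fin (idx p),
          (∏ l' ∈ Finset.range ((F ⟨p, l.castSucc⟩).1),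
            Dφ ((F ⟨p, l.castSucc⟩).2 l') s) • Dm ((F ⟨p, l.castSucc⟩).1) (φ s)
          = ((∏ l' ∈ (Finset.range (idx p)).erase (l : ℕ), Dφ (a p l') s) • Dφ ((a p l) + 1) s)
              • Dm (idx p) (φ s) := by
        intro l
        have hl : ((l.castSucc : Fin (idx p + 1)) : ℕ) < idx p := by
          simpa using l.isLt
        have hF : (F ⟨p, l.castSucc⟩ : ℕ × (ℕ → ℕ))
            = (idx p, Function.update (a p) (l : ℕ) (a p (l : ℕ) + 1)) := by
          simp only [F]
          rw [if_pos hl]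
          simp [Fin.coe_castSucc]
        rw [hF]
        simp only
        have hmem : (l : ℕ) ∈ Finset.range (idx p) := Finset.mem_range.mpr l.isLt
        have hprod : ∏ l' ∈ Finset.range (idx p),
              Dφ (Function.update (a p) (l : ℕ) (a p (l : ℕ) + 1) l') s
            = Dφ (a p (l : ℕ) + 1) s * ∏ l' ∈ (Finset.range (idx p)).erase (l : ℕ), Dφ (a p l') s := by
          rw [← Finset.mul_prod_erase _ _ hmem, Function.update_self]
          congr 1
          refine Finset.prod_congr rfl fun l' hl' => ?_
          rw [Function.update_of_ne (Finset.ne_of_mem_erase hl')]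
        rw [hprod]
        congr 1
        rw [smul_eq_mul, mul_comm]
      simp only [hcast_term, hlast_term]
      rw [add_comm]
      congr 1
      rw [Finset.sum_smul, ← Fin.sum_univ_eq_sum_range
        (fun l => ((∏ l' ∈ (Finset.range (idx p)).erase l, Dφ (a p l') s)
          • Dφ (a p l + 1) s) • Dm (idx p) (φ s)) (idx p)]

set_option maxHeartbeats 2000000 in
/-- Lemma 6.9, integer-order form: if `m` is `C^k` on `(0,∞)` and
satisfies the Mihlin–Hörmander condition of order `k ≥ 1`, and `φ : (0,∞) → (0,∞)` is a
smooth increasing function whose derivatives up to order `k` satisfy the two-sided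
power bounds (i) and (ii) near `0` and near `∞`, then `m ∘ φ` also satisfies the
Mihlin–Hörmander condition of order `k`. -/
theorem stmt_15 (k : ℕ) (hk : 1 ≤ k) (m : ℝ → ℂ)
    (hm_smooth : ContDiffOn ℝ k m (Set.Ioi 0))
    (hm : MihlinHormanderCond k m)
    (φ : ℝ → ℝ)
    (hφ_smooth : ContDiffOn ℝ (⊤ : ℕ∞) φ (Set.Ioi 0))
    (hφ_mono : StrictMonoOn φ (Set.Ioi 0))
    (hφ_pos : ∀ s : ℝ, 0 < s → 0 < φ s)
    (γ γ' M δ : ℝ) (hγ : 0 < γ) (hγ' : 0 < γ') (hM : 0 < M) (hδ : 0 < δ)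
    (hub0 : ∀ j : ℕ, j ≤ k → ∀ s : ℝ, 0 < s → s ≤ 1 →
      |iteratedDerivWithin j φ (Set.Ioi 0) s| ≤ M * s ^ (γ - (j : ℝ)))
    (hub1 : ∀ j : ℕ, j ≤ k → ∀ s : ℝ, 1 ≤ s →
      |iteratedDerivWithin j φ (Set.Ioi 0) s| ≤ M * s ^ (γ' - (j : ℝ)))
    (hlb0 : ∀ j : ℕ, j ≤ 1 → ∀ s : ℝ, 0 < s → s ≤ 1 →
      δ * s ^ (γ - (j : ℝ)) ≤ iteratedDerivWithin j φ (Set.Ioi 0) s)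
    (hlb1 : ∀ j : ℕ, j ≤ 1 → ∀ s : ℝ, 1 ≤ s →
      δ * s ^ (γ' - (j : ℝ)) ≤ iteratedDerivWithin j φ (Set.Ioi 0) s) :
    MihlinHormanderCond k (fun s => m (φ s)) := by
  classical
  have hU : UniqueDiffOn ℝ (Set.Ioi (0:ℝ)) := uniqueDiffOn_Ioi 0
  have hIccU : ∀ r : ℝ, 0 < r → Set.Icc r (2*r) ⊆ Set.Ioi (0:ℝ) :=
    fun r hr x hx => lt_of_lt_of_le hr hx.1
  have hφ_ub : ∀ s : ℝ, 0 < s → ((s ≤ 1 → φ s ≤ M * s ^ γ) ∧ (1 ≤ s → φ s ≤ M * s ^ γ')) := by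
    intro s hs
    constructor
    · intro h1
      have h := hub0 0 (Nat.zero_le k) s hs h1
      rw [iteratedDerivWithin_zero] at h
      have := (le_abs_self (φ s)).trans h
      simpa using this
    · intro h1
      have h := hub1 0 (Nat.zero_le k) s h1
      rw [iteratedDerivWithin_zero] at h
      have := (le_abs_self (φ s)).trans h
      simpa using this
  have hφ_lb : ∀ s : ℝ, 0 < s → ((s ≤ 1 → δ * s ^ γ ≤ φ s) ∧ (1 ≤ s → δ * s ^ γ' ≤ φ s)) := by
    intro s hs
    constructor
    · intro h1
      have h := hlb0 0 (Nat.zero_le 1) s hs h1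
      rw [iteratedDerivWithin_zero] at h
      simpa using h
    · intro h1
      have h := hlb1 0 (Nat.zero_le 1) s h1
      rw [iteratedDerivWithin_zero] at h
      simpa using h
  have hderiv_eq : ∀ s : ℝ, 0 < s → iteratedDerivWithin 1 φ (Set.Ioi 0) s = deriv φ s := by
    intro s hs
    rw [iteratedDerivWithin_one, derivWithin_of_isOpen isOpen_Ioi hs]
  have hd_lb : ∀ s : ℝ, 0 < s →
      ((s ≤ 1 → δ * s ^ (γ-1) ≤ deriv φ s) ∧ (1 ≤ s → δ * s ^ (γ'-1) ≤ deriv φ s)) := by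
    intro s hs
    constructor
    · intro h1
      have h := hlb0 1 (le_refl 1) s hs h1
      rw [hderiv_eq s hs] at h
      simpa using h
    · intro h1
      have h := hlb1 1 (le_refl 1) s h1
      rw [hderiv_eq s hs] at h
      simpa using h
  have hMδ : δ ≤ M := by
    have h1 := (hφ_lb 1 one_pos).1 le_rfl
    have h2 := (hφ_ub 1 one_pos).2 le_rfl
    rw [Real.one_rpow] at h1 h2
    linarith
  -- the uniform derivative bound constant C₀
  set C₀ : ℝ := max 1 (M/δ) with hC₀def
  have hC₀1 : (1:ℝ) ≤ C₀ := le_max_left _ _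
  have hC₀pos : (0:ℝ) < C₀ := lt_of_lt_of_le one_pos hC₀1
  have hC₀ : ∀ b : ℕ, b ≤ k → ∀ s : ℝ, 0 < s →
      |iteratedDerivWithin b φ (Set.Ioi 0) s| ≤ C₀ * φ s * ((s:ℝ) ^ b)⁻¹ := by
    intro b hb s hs
    have hsb : (0:ℝ) < s ^ b := pow_pos hs b
    have key : ∀ e : ℝ, M * s ^ (e - (b:ℝ)) = (M * s ^ e) * ((s:ℝ) ^ b)⁻¹ := by
      intro e
      rw [sub_eq_add_neg, Real.rpow_add hs, mul_assoc]
      congr 1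
      rw [Real.rpow_neg hs.le, Real.rpow_natCast]
    have main : ∀ e : ℝ, δ * s ^ e ≤ φ s → M * s ^ (e - (b:ℝ)) ≤ C₀ * φ s * ((s:ℝ)^b)⁻¹ := by
      intro e hlb'
      rw [key e]
      have h1 : M * s ^ e ≤ C₀ * φ s := by
        have heq : M * s ^ e = (M/δ) * (δ * s ^ e) := by field_simp
        rw [heq]
        calc (M/δ) * (δ * s ^ e) ≤ (M/δ) * φ s :=
              mul_le_mul_of_nonneg_left hlb' (by positivity)
          _ ≤ C₀ * φ s := mul_le_mul_of_nonneg_right (le_max_right _ _) (hφ_pos s hs).le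
      exact mul_le_mul_of_nonneg_right h1 (inv_nonneg.mpr hsb.le)
    rcases le_or_gt s 1 with h1 | h1
    · exact le_trans (hub0 b hb s hs h1) (main γ ((hφ_lb s hs).1 h1))
    · exact le_trans (hub1 b hb s h1.le) (main γ' ((hφ_lb s hs).2 h1.le))
  -- the doubling constant K
  set K : ℝ := (M/δ) * (2:ℝ) ^ (γ + γ') with hKdef
  have h2γγ' : (1:ℝ) ≤ (2:ℝ)^(γ+γ') := by
    rw [show (1:ℝ) = (2:ℝ)^(0:ℝ) by rw [Real.rpow_zero]]
    exact Real.rpow_le_rpow_of_exponent_le one_le_two (by positivity)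
  have hMδ1 : (1:ℝ) ≤ M/δ := (one_le_div hδ).mpr hMδ
  have hK1 : (1:ℝ) ≤ K := by nlinarith
  have hKpos : (0:ℝ) < K := lt_of_lt_of_le one_pos hK1
  have hK : ∀ r : ℝ, 0 < r → φ (2*r) ≤ K * φ r := by
    intro r hr
    have h2r : (0:ℝ) < 2*r := by linarith
    have hφr : (0:ℝ) < φ r := hφ_pos r hr
    rcases le_or_gt (2*r) 1 with hA | hA
    · have hr1 : r ≤ 1 := by linarith
      have hub := (hφ_ub (2*r) h2r).1 hA
      have hlb := (hφ_lb r hr).1 hr1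
      have h2 : (2*r:ℝ) ^ γ = 2^γ * r^γ := Real.mul_rpow (by norm_num) hr.le
      have h2e : (2:ℝ)^γ ≤ (2:ℝ)^(γ+γ') :=
        Real.rpow_le_rpow_of_exponent_le one_le_two (by linarith)
      calc φ (2*r) ≤ M * (2^γ * r^γ) := by rwa [h2] at hub
        _ = (M * r^γ) * 2^γ := by ring
        _ ≤ (M * r^γ) * 2^(γ+γ') := by
            refine mul_le_mul_of_nonneg_left h2e ?_
            positivity
        _ = (M/δ) * 2^(γ+γ') * (δ * r^γ) := by field_simp
        _ ≤ K * φ r := mul_le_mul_of_nonneg_left hlb (by positivity)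
    · rcases le_or_gt 1 r with hB | hB
      · have hub := (hφ_ub (2*r) h2r).2 (by linarith)
        have hlb := (hφ_lb r hr).2 hB
        have h2 : (2*r:ℝ) ^ γ' = 2^γ' * r^γ' := Real.mul_rpow (by norm_num) hr.le
        have h2e : (2:ℝ)^γ' ≤ (2:ℝ)^(γ+γ') :=
          Real.rpow_le_rpow_of_exponent_le one_le_two (by linarith)
        calc φ (2*r) ≤ M * (2^γ' * r^γ') := by rwa [h2] at hub
          _ = (M * r^γ') * 2^γ' := by ring
          _ ≤ (M * r^γ') * 2^(γ+γ') := by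
              refine mul_le_mul_of_nonneg_left h2e ?_
              positivity
          _ = (M/δ) * 2^(γ+γ') * (δ * r^γ') := by field_simp
          _ ≤ K * φ r := mul_le_mul_of_nonneg_left hlb (by positivity)
      · -- middle case : r < 1 < 2r
        have hub := (hφ_ub (2*r) h2r).2 hA.le
        have h2r2 : (2*r:ℝ) ≤ 2 := by linarith
        have h2rγ' : (2*r:ℝ)^γ' ≤ (2:ℝ)^γ' := Real.rpow_le_rpow h2r.le h2r2 hγ'.le
        have hlb := (hφ_lb r hr).1 hB.le
        have hhalf : (1/2:ℝ) ≤ r := by linarith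
        calc φ (2*r) ≤ M * (2*r)^γ' := hub
          _ ≤ M * 2^γ' := mul_le_mul_of_nonneg_left h2rγ' hM.le
          _ = (M/δ) * 2^(γ+γ') * (δ * (1/2:ℝ)^γ) := by
              rw [one_div, Real.inv_rpow (by norm_num : (0:ℝ) ≤ 2), Real.rpow_add two_pos]
              field_simp
          _ ≤ (M/δ) * 2^(γ+γ') * (δ * r^γ) := by
              refine mul_le_mul_of_nonneg_left ?_ (by positivity)
              exact mul_le_mul_of_nonneg_left
                (Real.rpow_le_rpow (by norm_num) hhalf hγ.le) hδ.le
          _ ≤ K * φ r := mul_le_mul_of_nonneg_left hlb (by positivity)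
  -- the derivative lower bound constant c
  set c₁ : ℝ := (δ/M) * min 1 ((2:ℝ) ^ (γ-1)) with hc₁def
  set c₂ : ℝ := (δ/M) * min 1 ((2:ℝ) ^ (γ'-1)) with hc₂def
  set μ₃ : ℝ := min (min ((1/2:ℝ) ^ (γ-1)) ((1:ℝ) ^ (γ-1)))
      (min ((1:ℝ) ^ (γ'-1)) ((2:ℝ) ^ (γ'-1))) with hμ₃def
  set c₃ : ℝ := (δ/(2*M)) * μ₃ with hc₃def
  have hmin1pos : (0:ℝ) < min 1 ((2:ℝ) ^ (γ-1)) :=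
    lt_min one_pos (Real.rpow_pos_of_pos two_pos _)
  have hmin2pos : (0:ℝ) < min 1 ((2:ℝ) ^ (γ'-1)) :=
    lt_min one_pos (Real.rpow_pos_of_pos two_pos _)
  have hμ₃pos : (0:ℝ) < μ₃ := by
    refine lt_min (lt_min ?_ ?_) (lt_min ?_ ?_) <;>
      exact Real.rpow_pos_of_pos (by norm_num) _
  have hc₁pos : (0:ℝ) < c₁ := by
    have : (0:ℝ) < δ/M := by positivity
    exact mul_pos this hmin1pos
  have hc₂pos : (0:ℝ) < c₂ := by
    have : (0:ℝ) < δ/M := by positivity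
    exact mul_pos this hmin2pos
  have hc₃pos : (0:ℝ) < c₃ := by
    have : (0:ℝ) < δ/(2*M) := by positivity
    exact mul_pos this hμ₃pos
  set c : ℝ := min c₁ (min c₂ c₃) with hcdef
  have hcpos : (0:ℝ) < c := lt_min hc₁pos (lt_min hc₂pos hc₃pos)
  have hc : ∀ r : ℝ, 0 < r → ∀ s ∈ Set.Icc r (2*r), c * (φ r / r) ≤ deriv φ s := by
    intro r hr s hs
    have hs0 : (0:ℝ) < s := lt_of_lt_of_le hr hs.1
    have hφr : (0:ℝ) < φ r := hφ_pos r hr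
    rcases le_or_gt (2*r) 1 with hA | hA
    · -- small case : s ≤ 1
      have hs1 : s ≤ 1 := le_trans hs.2 hA
      have hr1 : r ≤ 1 := by linarith
      have hd := (hd_lb s hs0).1 hs1
      have hub := (hφ_ub r hr).1 hr1
      have hmin : min 1 ((2:ℝ)^(γ-1)) * r ^ (γ-1) ≤ s ^ (γ-1) := by
        refine le_trans ?_ (stmt15_min_rpow_le hr hs.1 hs.2)
        refine le_min ?_ ?_
        · nlinarith [Real.rpow_pos_of_pos hr (γ-1), min_le_left (1:ℝ) ((2:ℝ)^(γ-1))]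
        · rw [Real.mul_rpow (by norm_num) hr.le]
          exact mul_le_mul_of_nonneg_right (min_le_right _ _)
            (Real.rpow_pos_of_pos hr _).le
      have hsplit : r ^ (γ-1) = r ^ γ / r := by
        rw [Real.rpow_sub hr, Real.rpow_one]
      calc c * (φ r / r) ≤ c₁ * (φ r / r) := by
            refine mul_le_mul_of_nonneg_right (min_le_left _ _) (by positivity)
        _ = (δ/M) * min 1 ((2:ℝ)^(γ-1)) * (φ r / r) := by rw [hc₁def]
        _ ≤ (δ/M) * min 1 ((2:ℝ)^(γ-1)) * ((M * r ^ γ) / r) := by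
            gcongr
        _ = δ * (min 1 ((2:ℝ)^(γ-1)) * r ^ (γ-1)) := by
            rw [hsplit]; field_simp
        _ ≤ δ * s ^ (γ-1) := mul_le_mul_of_nonneg_left hmin hδ.le
        _ ≤ deriv φ s := hd
    · rcases le_or_gt 1 r with hB | hB
      · -- large case : 1 ≤ s
        have hs1 : (1:ℝ) ≤ s := le_trans hB hs.1
        have hd := (hd_lb s hs0).2 hs1
        have hub := (hφ_ub r hr).2 hB
        have hmin : min 1 ((2:ℝ)^(γ'-1)) * r ^ (γ'-1) ≤ s ^ (γ'-1) := by
          refine le_trans ?_ (stmt15_min_rpow_le hr hs.1 hs.2)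
          refine le_min ?_ ?_
          · nlinarith [Real.rpow_pos_of_pos hr (γ'-1), min_le_left (1:ℝ) ((2:ℝ)^(γ'-1))]
          · rw [Real.mul_rpow (by norm_num) hr.le]
            exact mul_le_mul_of_nonneg_right (min_le_right _ _)
              (Real.rpow_pos_of_pos hr _).le
        have hsplit : r ^ (γ'-1) = r ^ γ' / r := by
          rw [Real.rpow_sub hr, Real.rpow_one]
        calc c * (φ r / r) ≤ c₂ * (φ r / r) := by
              refine mul_le_mul_of_nonneg_right
                (le_trans (min_le_right _ _) (min_le_left _ _)) (by positivity)
          _ = (δ/M) * min 1 ((2:ℝ)^(γ'-1)) * (φ r / r) := by rw [hc₂def]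
          _ ≤ (δ/M) * min 1 ((2:ℝ)^(γ'-1)) * ((M * r ^ γ') / r) := by
              gcongr
          _ = δ * (min 1 ((2:ℝ)^(γ'-1)) * r ^ (γ'-1)) := by
              rw [hsplit]; field_simp
          _ ≤ δ * s ^ (γ'-1) := mul_le_mul_of_nonneg_left hmin hδ.le
          _ ≤ deriv φ s := hd
      · -- middle case : 1/2 < r < 1 < 2r
        have hrhalf : (1/2:ℝ) < r := by linarith
        have hd3 : δ * μ₃ ≤ deriv φ s := by
          rcases le_or_gt s 1 with hs1 | hs1
          · have hd := (hd_lb s hs0).1 hs1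
            have hmin : μ₃ ≤ s ^ (γ-1) := by
              refine le_trans (min_le_left _ _) ?_
              exact stmt15_min_rpow_le (by norm_num : (0:ℝ) < 1/2) (by linarith [hs.1]) hs1
            exact le_trans (mul_le_mul_of_nonneg_left hmin hδ.le) hd
          · have hd := (hd_lb s hs0).2 hs1.le
            have hmin : μ₃ ≤ s ^ (γ'-1) := by
              refine le_trans (min_le_right _ _) ?_
              exact stmt15_min_rpow_le one_pos hs1.le (by linarith [hs.2])
            exact le_trans (mul_le_mul_of_nonneg_left hmin hδ.le) hd
        have hφrub : φ r ≤ M := by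
          have h1 := (hφ_ub r hr).1 hB.le
          have h2 : r ^ γ ≤ 1 := Real.rpow_le_one hr.le hB.le hγ.le
          nlinarith
        have hfrr : φ r / r ≤ 2*M := by
          rw [div_le_iff₀ hr]
          nlinarith
        calc c * (φ r / r) ≤ c₃ * (φ r / r) := by
              refine mul_le_mul_of_nonneg_right
                (le_trans (min_le_right _ _) (min_le_right _ _)) (by positivity)
          _ ≤ c₃ * (2*M) := mul_le_mul_of_nonneg_left hfrr hc₃pos.le
          _ = δ * μ₃ := by rw [hc₃def]; field_simp
          _ ≤ deriv φ s := hd3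
  -- choose N with K ≤ 2^N
  obtain ⟨N, hN⟩ : ∃ N : ℕ, K ≤ 2^N := by
    obtain ⟨N, hN⟩ := pow_unbounded_of_one_lt K (one_lt_two (α := ℝ))
    exact ⟨N, hN.le⟩
  -- the per-order integral bound after substitution
  have hIbound : ∀ i : ℕ, i ≤ k → ∃ C : ℝ, 0 ≤ C ∧ ∀ r : ℝ, 0 < r →
      (∫ s in Set.Ioc r (2*r), ‖iteratedDerivWithin i m (Set.Ioi 0) (φ s)‖^2)
        ≤ C * r * (φ r) ^ (-(2*(i:ℤ))) := by
    intro i hik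
    obtain ⟨A, hA⟩ := hm i hik
    have hgc : ContinuousOn (fun t => ‖iteratedDerivWithin i m (Set.Ioi 0) t‖^2)
        (Set.Ioi (0:ℝ)) :=
      ((hm_smooth.continuousOn_iteratedDerivWithin (by exact_mod_cast hik) hU).norm.pow 2)
    have hg0 : ∀ t : ℝ, 0 < t → 0 ≤ ‖iteratedDerivWithin i m (Set.Ioi 0) t‖^2 :=
      fun t _ => by positivity
    have hA' : ∀ r : ℝ, 0 < r →
        (∫ t in Set.Ioc r (2*r), ‖iteratedDerivWithin i m (Set.Ioi 0) t‖^2)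
          ≤ A * r ^ ((1:ℤ) - 2*i) := by
      intro r hr
      have hp : (0:ℝ) < r ^ (2*(i:ℤ)-1) := zpow_pos hr _
      have h2 := (le_div_iff₀' hp).mpr (hA r hr)
      rw [div_eq_inv_mul] at h2
      refine h2.trans (le_of_eq ?_)
      rw [← zpow_neg, neg_sub, mul_comm]
    obtain ⟨C₁, hC₁0, hC₁⟩ := stmt15_dyadic _ hg0 hgc ((1:ℤ) - 2*i) (by omega) A hA' N
    refine ⟨C₁ / c, by positivity, fun r hr => ?_⟩
    have hφr : (0:ℝ) < φ r := hφ_pos r hr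
    have hcr : (0:ℝ) < c * (φ r / r) := by positivity
    have hsub := stmt15_subst φ hφ_smooth hφ_mono _ hgc hg0 hφ_pos r (c * (φ r / r)) hr hcr
      (fun s hs => hc r hr s hs)
    have hup : φ (2*r) ≤ 2^N * φ r :=
      (hK r hr).trans (mul_le_mul_of_nonneg_right hN hφr.le)
    have hmono2 : (∫ t in Set.Ioc (φ r) (φ (2*r)), ‖iteratedDerivWithin i m (Set.Ioi 0) t‖^2)
        ≤ ∫ t in Set.Ioc (φ r) (2^N * φ r), ‖iteratedDerivWithin i m (Set.Ioi 0) t‖^2 := by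
      apply setIntegral_mono_set
      · refine ((hgc.mono ?_).integrableOn_Icc).mono_set Set.Ioc_subset_Icc_self
        intro x hx; exact lt_of_lt_of_le hφr hx.1
      · exact (ae_restrict_iff' measurableSet_Ioc).mpr
          (Filter.Eventually.of_forall (fun t ht => hg0 t (lt_trans hφr ht.1)))
      · exact (Set.Ioc_subset_Ioc_right hup).eventuallyLE
    have hdya := hC₁ (φ r) hφr
    calc (∫ s in Set.Ioc r (2*r), ‖iteratedDerivWithin i m (Set.Ioi 0) (φ s)‖^2)
        ≤ (c * (φ r / r))⁻¹ *
            ∫ t in Set.Ioc (φ r) (φ (2*r)), ‖iteratedDerivWithin i m (Set.Ioi 0) t‖^2 := hsub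
      _ ≤ (c * (φ r / r))⁻¹ * (C₁ * (φ r) ^ ((1:ℤ) - 2*i)) :=
          mul_le_mul_of_nonneg_left (hmono2.trans hdya) (inv_nonneg.mpr hcr.le)
      _ = C₁ / c * r * (φ r) ^ (-(2*(i:ℤ))) := by
          have hsplit : (φ r) ^ ((1:ℤ) - 2*i) = φ r * (φ r) ^ (-(2*(i:ℤ))) := by
            rw [sub_eq_add_neg, zpow_add₀ hφr.ne', zpow_one]
          rw [hsplit]
          have hcne : c ≠ 0 := hcpos.ne'
          have hrne : r ≠ 0 := hr.ne'
          have hφne : φ r ≠ 0 := hφr.ne'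
          field_simp
  -- main goal
  intro j hjk
  rcases Nat.eq_zero_or_pos j with rfl | hj1
  · -- j = 0
    obtain ⟨C, hC0, hCb⟩ := hIbound 0 (Nat.zero_le k)
    refine ⟨C, fun r hr => ?_⟩
    have h := hCb r hr
    simp only [iteratedDerivWithin_zero, Nat.cast_zero, mul_zero, neg_zero, zpow_zero,
      mul_one, zero_sub] at h ⊢
    rw [zpow_neg_one]
    calc r⁻¹ * ∫ s in Set.Ioc r (2*r), ‖m (φ s)‖^2
        ≤ r⁻¹ * (C * r) := mul_le_mul_of_nonneg_left h (inv_nonneg.mpr hr.le)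
      _ = C := by field_simp
  · -- j ≥ 1
    obtain ⟨n, idx, a, hidx, hposl, hsuml, heq⟩ :=
      stmt15_fdb k m φ hm_smooth hφ_smooth hφ_pos j hj1 hjk
    set B : ℝ := (C₀ * K)^k with hBdef
    have hCK1 : (1:ℝ) ≤ C₀ * K := by nlinarith
    have hB1 : (1:ℝ) ≤ B := one_le_pow₀ hCK1
    have hBpos : (0:ℝ) < B := lt_of_lt_of_le one_pos hB1
    choose CC hCC0 hCCb using hIbound
    set Cf : ℕ → ℝ := fun i => if h : i ≤ k then CC i h else 0 with hCfdef
    have hCf0 : ∀ i, 0 ≤ Cf i := by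
      intro i
      simp only [Cf]
      split
      · exact hCC0 _ _
      · exact le_rfl
    set S : ℝ := ∑ i ∈ Finset.Icc 1 j, Cf i with hSdef
    have hS0 : 0 ≤ S := Finset.sum_nonneg fun i _ => hCf0 i
    refine ⟨(n:ℝ)^2 * B^2 * S, fun r hr => ?_⟩
    have hφr : (0:ℝ) < φ r := hφ_pos r hr
    have h2r : (0:ℝ) < 2*r := by linarith
    have hrj : (0:ℝ) < r^j := pow_pos hr j
    set W : ℝ → ℝ := fun s => ∑ i ∈ Finset.Icc 1 j,
      ((φ r)^i)^2 * ‖iteratedDerivWithin i m (Set.Ioi 0) (φ s)‖^2 with hWdef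
    have hWcont : ContinuousOn W (Set.Ioi (0:ℝ)) := by
      apply continuousOn_finset_sum
      intro i hi
      have hik : i ≤ k := le_trans (Finset.mem_Icc.mp hi).2 hjk
      refine ContinuousOn.mul continuousOn_const ?_
      exact (((hm_smooth.continuousOn_iteratedDerivWithin (by exact_mod_cast hik) hU).comp
        (hφ_smooth.continuousOn) (fun x hx => hφ_pos x hx)).norm.pow 2)
    -- pointwise bound
    have hpt : ∀ s ∈ Set.Ioc r (2*r),
        ‖iteratedDerivWithin j (fun x => m (φ x)) (Set.Ioi 0) s‖^2
          ≤ ((n:ℝ)^2 * B^2 * (((r^j : ℝ))⁻¹)^2) * W s := by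
      intro s hs
      have hs0 : (0:ℝ) < s := lt_trans hr hs.1
      have hsK : φ s ≤ K * φ r := by
        have h1 : φ s ≤ φ (2*r) := by
          rcases eq_or_lt_of_le hs.2 with hhe | hlt
          · rw [hhe]
          · exact (hφ_mono (Set.mem_Ioi.mpr hs0) (Set.mem_Ioi.mpr h2r) hlt).le
        exact h1.trans (hK r hr)
      have hprodb : ∀ p, |∏ l ∈ Finset.range (idx p),
            iteratedDerivWithin (a p l) φ (Set.Ioi 0) s|
          ≤ B * (φ r)^(idx p) * ((r^j : ℝ))⁻¹ := by
        intro p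
        have hstep : ∀ l ∈ Finset.range (idx p),
            |iteratedDerivWithin (a p l) φ (Set.Ioi 0) s|
              ≤ (C₀ * K * φ r) * (((s:ℝ)^(a p l))⁻¹) := by
          intro l hl
          have halk : a p l ≤ k := by
            refine le_trans (le_trans ?_ (le_of_eq (hsuml p))) hjk
            exact Finset.single_le_sum (f := fun l => a p l) (fun _ _ => Nat.zero_le _) hl
          have h1 := hC₀ (a p l) halk s hs0
          refine h1.trans ?_
          have h2 : C₀ * φ s ≤ C₀ * K * φ r := by
            rw [mul_assoc]
            exact mul_le_mul_of_nonneg_left hsK hC₀pos.le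
          exact mul_le_mul_of_nonneg_right h2 (inv_nonneg.mpr (pow_pos hs0 _).le)
        calc |∏ l ∈ Finset.range (idx p), iteratedDerivWithin (a p l) φ (Set.Ioi 0) s|
            = ∏ l ∈ Finset.range (idx p), |iteratedDerivWithin (a p l) φ (Set.Ioi 0) s| :=
              Finset.abs_prod _ _
          _ ≤ ∏ l ∈ Finset.range (idx p), ((C₀ * K * φ r) * (((s:ℝ)^(a p l))⁻¹)) :=
              Finset.prod_le_prod (fun l _ => abs_nonneg _) hstep
          _ = (C₀ * K * φ r)^(idx p) *
              (∏ l ∈ Finset.range (idx p), ((s:ℝ)^(a p l))⁻¹) := by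
              rw [Finset.prod_mul_distrib, Finset.prod_const, Finset.card_range]
          _ = (C₀ * K * φ r)^(idx p) * ((s:ℝ)^j)⁻¹ := by
              rw [Finset.prod_inv_distrib, Finset.prod_pow_eq_pow_sum, hsuml p]
          _ ≤ B * (φ r)^(idx p) * ((r^j : ℝ))⁻¹ := by
              rw [mul_pow]
              have h1 : (C₀*K)^(idx p) ≤ B :=
                pow_le_pow_right₀ hCK1 ((hidx p).2.trans hjk)
              have h2 : (((s:ℝ))^j)⁻¹ ≤ ((r^j : ℝ))⁻¹ := by
                gcongr
                exact hs.1.le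
              gcongr
              -- the norm of the value
      have h1 : ‖iteratedDerivWithin j (fun x => m (φ x)) (Set.Ioi 0) s‖
          ≤ ∑ p, |∏ l ∈ Finset.range (idx p), iteratedDerivWithin (a p l) φ (Set.Ioi 0) s|
              * ‖iteratedDerivWithin (idx p) m (Set.Ioi 0) (φ s)‖ := by
        rw [heq s (Set.mem_Ioi.mpr hs0)]
        refine le_trans (norm_sum_le _ _) (le_of_eq (Finset.sum_congr rfl fun p _ => ?_))
        rw [norm_smul, Real.norm_eq_abs]
      have h2 : ‖iteratedDerivWithin j (fun x => m (φ x)) (Set.Ioi 0) s‖^2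
          ≤ (∑ p, |∏ l ∈ Finset.range (idx p), iteratedDerivWithin (a p l) φ (Set.Ioi 0) s|
              * ‖iteratedDerivWithin (idx p) m (Set.Ioi 0) (φ s)‖)^2 :=
        pow_le_pow_left₀ (norm_nonneg _) h1 2
      have h3 : (∑ p, |∏ l ∈ Finset.range (idx p), iteratedDerivWithin (a p l) φ (Set.Ioi 0) s|
              * ‖iteratedDerivWithin (idx p) m (Set.Ioi 0) (φ s)‖)^2
          ≤ (n:ℝ) * ∑ p, (|∏ l ∈ Finset.range (idx p), iteratedDerivWithin (a p l) φ (Set.Ioi 0) s|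
              * ‖iteratedDerivWithin (idx p) m (Set.Ioi 0) (φ s)‖)^2 := by
        have := sq_sum_le_card_mul_sum_sq (s := (Finset.univ : Finset (Fin n)))
          (f := fun p => |∏ l ∈ Finset.range (idx p), iteratedDerivWithin (a p l) φ (Set.Ioi 0) s|
              * ‖iteratedDerivWithin (idx p) m (Set.Ioi 0) (φ s)‖)
        simpa using this
      have h4 : ∀ p : Fin n,
          (|∏ l ∈ Finset.range (idx p), iteratedDerivWithin (a p l) φ (Set.Ioi 0) s|
              * ‖iteratedDerivWithin (idx p) m (Set.Ioi 0) (φ s)‖)^2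
            ≤ (B^2 * (((r^j : ℝ))⁻¹)^2) * W s := by
        intro p
        have hp1 : (|∏ l ∈ Finset.range (idx p), iteratedDerivWithin (a p l) φ (Set.Ioi 0) s|
              * ‖iteratedDerivWithin (idx p) m (Set.Ioi 0) (φ s)‖)^2
            ≤ (B * (φ r)^(idx p) * ((r^j : ℝ))⁻¹)^2
                * ‖iteratedDerivWithin (idx p) m (Set.Ioi 0) (φ s)‖^2 := by
          rw [mul_pow]
          refine mul_le_mul_of_nonneg_right ?_ (by positivity)
          exact pow_le_pow_left₀ (abs_nonneg _) (hprodb p) 2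
        rw [show (B * (φ r)^(idx p) * ((r^j : ℝ))⁻¹)^2
            = (B^2 * (((r^j : ℝ))⁻¹)^2) * ((φ r)^(idx p))^2 by ring] at hp1
        refine hp1.trans ?_
        rw [mul_assoc]
        refine mul_le_mul_of_nonneg_left ?_ (by positivity)
        refine Finset.single_le_sum
          (f := fun i => ((φ r)^i)^2 * ‖iteratedDerivWithin i m (Set.Ioi 0) (φ s)‖^2)
          (fun i _ => by positivity) (Finset.mem_Icc.mpr ⟨(hidx p).1, (hidx p).2⟩)
      calc ‖iteratedDerivWithin j (fun x => m (φ x)) (Set.Ioi 0) s‖^2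
          ≤ (n:ℝ) * ∑ p, (|∏ l ∈ Finset.range (idx p),
                iteratedDerivWithin (a p l) φ (Set.Ioi 0) s|
              * ‖iteratedDerivWithin (idx p) m (Set.Ioi 0) (φ s)‖)^2 := le_trans h2 h3
        _ ≤ (n:ℝ) * ∑ _p : Fin n, (B^2 * (((r^j : ℝ))⁻¹)^2) * W s := by
            refine mul_le_mul_of_nonneg_left ?_ (Nat.cast_nonneg n)
            exact Finset.sum_le_sum fun p _ => h4 p
        _ = ((n:ℝ)^2 * B^2 * (((r^j : ℝ))⁻¹)^2) * W s := by
            rw [Finset.sum_const, Finset.card_univ, Fintype.card_fin, nsmul_eq_mul]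
            ring
    -- integrability facts
    have hcomp : ContDiffOn ℝ k (fun s => m (φ s)) (Set.Ioi 0) :=
      hm_smooth.comp (hφ_smooth.of_le (by exact_mod_cast le_top))
        (fun x hx => hφ_pos x hx)
    have hFcont : ContinuousOn
        (fun s => ‖iteratedDerivWithin j (fun x => m (φ x)) (Set.Ioi 0) s‖^2)
        (Set.Ioi (0:ℝ)) :=
      ((hcomp.continuousOn_iteratedDerivWithin (by exact_mod_cast hjk) hU).norm.pow 2)
    have hIntF : IntegrableOn
        (fun s => ‖iteratedDerivWithin j (fun x => m (φ x)) (Set.Ioi 0) s‖^2)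
        (Set.Ioc r (2*r)) :=
      ((hFcont.mono (hIccU r hr)).integrableOn_Icc).mono_set Set.Ioc_subset_Icc_self
    have hIntW : IntegrableOn (fun s => ((n:ℝ)^2 * B^2 * (((r^j : ℝ))⁻¹)^2) * W s)
        (Set.Ioc r (2*r)) :=
      (((continuousOn_const.mul hWcont).mono (hIccU r hr)).integrableOn_Icc).mono_set
        Set.Ioc_subset_Icc_self
    have hIntTerm : ∀ i ∈ Finset.Icc 1 j, IntegrableOn
        (fun s => ((φ r)^i)^2 * ‖iteratedDerivWithin i m (Set.Ioi 0) (φ s)‖^2)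
        (Set.Ioc r (2*r)) := by
      intro i hi
      have hik : i ≤ k := le_trans (Finset.mem_Icc.mp hi).2 hjk
      have hcont : ContinuousOn
          (fun s => ((φ r)^i)^2 * ‖iteratedDerivWithin i m (Set.Ioi 0) (φ s)‖^2)
          (Set.Ioi (0:ℝ)) := by
        refine ContinuousOn.mul continuousOn_const ?_
        exact (((hm_smooth.continuousOn_iteratedDerivWithin (by exact_mod_cast hik) hU).comp
          (hφ_smooth.continuousOn) (fun x hx => hφ_pos x hx)).norm.pow 2)
      exact ((hcont.mono (hIccU r hr)).integrableOn_Icc).mono_set Set.Ioc_subset_Icc_self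
    -- the integral estimates
    have hImono : (∫ s in Set.Ioc r (2*r),
          ‖iteratedDerivWithin j (fun x => m (φ x)) (Set.Ioi 0) s‖^2)
        ≤ ∫ s in Set.Ioc r (2*r), ((n:ℝ)^2 * B^2 * (((r^j : ℝ))⁻¹)^2) * W s :=
      setIntegral_mono_on hIntF hIntW measurableSet_Ioc hpt
    have hWint : (∫ s in Set.Ioc r (2*r), W s)
        = ∑ i ∈ Finset.Icc 1 j, ((φ r)^i)^2 *
            ∫ s in Set.Ioc r (2*r), ‖iteratedDerivWithin i m (Set.Ioi 0) (φ s)‖^2 := by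
      simp only [W]
      rw [integral_finset_sum _ hIntTerm]
      exact Finset.sum_congr rfl fun i _ => MeasureTheory.integral_const_mul _ _
    have hWbound : (∫ s in Set.Ioc r (2*r), W s) ≤ S * r := by
      rw [hWint]
      have hterm : ∀ i ∈ Finset.Icc 1 j, ((φ r)^i)^2 *
            (∫ s in Set.Ioc r (2*r), ‖iteratedDerivWithin i m (Set.Ioi 0) (φ s)‖^2)
          ≤ Cf i * r := by
        intro i hi
        have hik : i ≤ k := le_trans (Finset.mem_Icc.mp hi).2 hjk
        have hb := hCCb i hik r hr
        have hCfi : Cf i = CC i hik := by simp only [Cf]; rw [dif_pos hik]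
        have hcancel : ((φ r)^i)^2 * (φ r) ^ (-(2*(i:ℤ))) = 1 := by
          rw [← pow_mul, ← zpow_natCast (φ r) (i*2), ← zpow_add₀ hφr.ne']
          rw [show ((i*2:ℕ):ℤ) + (-(2*(i:ℤ))) = 0 by push_cast; ring]
          exact zpow_zero _
        calc ((φ r)^i)^2 *
              (∫ s in Set.Ioc r (2*r), ‖iteratedDerivWithin i m (Set.Ioi 0) (φ s)‖^2)
            ≤ ((φ r)^i)^2 * (CC i hik * r * (φ r) ^ (-(2*(i:ℤ)))) :=
              mul_le_mul_of_nonneg_left hb (by positivity)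
          _ = CC i hik * r * (((φ r)^i)^2 * (φ r) ^ (-(2*(i:ℤ)))) := by ring
          _ = Cf i * r := by rw [hcancel, mul_one, hCfi]
      calc (∑ i ∈ Finset.Icc 1 j, ((φ r)^i)^2 *
            ∫ s in Set.Ioc r (2*r), ‖iteratedDerivWithin i m (Set.Ioi 0) (φ s)‖^2)
          ≤ ∑ i ∈ Finset.Icc 1 j, Cf i * r := Finset.sum_le_sum hterm
        _ = S * r := by rw [hSdef, Finset.sum_mul]
    have hfinal : (∫ s in Set.Ioc r (2*r),
          ‖iteratedDerivWithin j (fun x => m (φ x)) (Set.Ioi 0) s‖^2)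
        ≤ (n:ℝ)^2 * B^2 * (((r^j:ℝ))⁻¹)^2 * (S * r) := by
      refine hImono.trans ?_
      rw [MeasureTheory.integral_const_mul]
      exact mul_le_mul_of_nonneg_left hWbound (by positivity)
    have hpow1 : ((r^j : ℝ))⁻¹ = r ^ (-(j:ℤ)) := by
      rw [← zpow_natCast r j, ← zpow_neg]
    have hpow : r ^ (2*(j:ℤ)-1) * (((r^j:ℝ))⁻¹)^2 * r = 1 := by
      rw [hpow1, ← zpow_natCast (r ^ (-(j:ℤ))) 2, ← zpow_mul]
      calc r ^ (2*(j:ℤ)-1) * r ^ ((-(j:ℤ))*2) * r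
          = r ^ (2*(j:ℤ)-1) * r ^ ((-(j:ℤ))*2) * r^(1:ℤ) := by rw [zpow_one]
        _ = r ^ ((2*(j:ℤ)-1) + ((-(j:ℤ))*2) + 1) := by
            rw [← zpow_add₀ hr.ne', ← zpow_add₀ hr.ne']
        _ = 1 := by
            rw [show (2*(j:ℤ)-1) + ((-(j:ℤ))*2) + 1 = 0 by ring, zpow_zero]
    calc r ^ (2*(j:ℤ)-1) * ∫ s in Set.Ioc r (2*r),
          ‖iteratedDerivWithin j (fun x => m (φ x)) (Set.Ioi 0) s‖^2
        ≤ r ^ (2*(j:ℤ)-1) * ((n:ℝ)^2 * B^2 * (((r^j:ℝ))⁻¹)^2 * (S * r)) :=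
          mul_le_mul_of_nonneg_left hfinal (zpow_pos hr _).le
      _ = ((n:ℝ)^2 * B^2 * S) * (r ^ (2*(j:ℤ)-1) * (((r^j:ℝ))⁻¹)^2 * r) := by ring
      _ = (n:ℝ)^2 * B^2 * S := by rw [hpow, mul_one]
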